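/- If x and z are two feasible solutions of the same integer program {Ax = b, l <= x <= u}, then z - x can be written as a sum of Graver basis elements each conformal to z - x, and each partial sum x + (g_1 + ... + g_j) is again feasible. -/
import Mathlib


/-- The conformal (sign-compatible) partial order on `ℤ^n`. -/
def ConformalLE {n : ℕ} (x y : Fin n → ℤ) : Prop :=
  ∀ i, 0 ≤ x i * y i ∧ |x i| ≤ |y i|

/-- The Graver basis of an integer `m × n` matrix `A`. -/
def GraverBasis {m n : ℕ} (A : Matrix (Fin m) (Fin n) ℤ) : Set (Fin n → ℤ) :=
  {g | A.mulVec g = 0 ∧ g ≠ 0 ∧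
    ∀ h : Fin n → ℤ, A.mulVec h = 0 → h ≠ 0 → ConformalLE h g → h = g}

/-- Feasibility of `x` for the program `{Ax = b, l ≤ x ≤ u}`, where the bounds
live in `ℤ ∪ {±∞}` (modeled via `EReal`). -/
def Feasible {m n : ℕ} (A : Matrix (Fin m) (Fin n) ℤ) (b : Fin m → ℤ)
    (l u : Fin n → EReal) (x : Fin n → ℤ) : Prop :=
  A.mulVec x = b ∧ ∀ i, l i ≤ ((x i : ℝ) : EReal) ∧ ((x i : ℝ) : EReal) ≤ u i

lemma conf_scalar_iff {a c : ℤ} : (0 ≤ a * c ∧ |a| ≤ |c|) ↔ (min 0 c ≤ a ∧ a ≤ max 0 c) := by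
  constructor
  · rintro ⟨h1, h2⟩
    rcases lt_trichotomy c 0 with hc | hc | hc
    · have ha : a ≤ 0 := by nlinarith
      rw [abs_of_neg hc] at h2
      rw [abs_of_nonpos ha] at h2
      constructor <;> omega
    · subst hc; simp at h2 ⊢; omega
    · have ha : 0 ≤ a := by nlinarith
      rw [abs_of_pos hc, abs_of_nonneg ha] at h2
      constructor <;> omega
  · rintro ⟨h1, h2⟩
    constructor
    · rcases le_total 0 c with hc | hc
      · have : 0 ≤ a := le_trans (by simp [min_eq_left hc]) h1
        exact mul_nonneg this hc
      · have : a ≤ 0 := le_trans h2 (by simp [max_eq_left hc])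
        exact mul_nonneg_of_nonpos_of_nonpos this hc
    · rcases le_total 0 c with hc | hc
      · simp [min_eq_left hc] at h1; rw [abs_of_nonneg h1, abs_of_nonneg hc]; omega
      · simp [max_eq_left hc] at h2; rw [abs_of_nonpos h2, abs_of_nonpos hc]; omega

lemma conf_between {n : ℕ} {x y : Fin n → ℤ} (h : ConformalLE x y) (i : Fin n) :
    min 0 (y i) ≤ x i ∧ x i ≤ max 0 (y i) := conf_scalar_iff.1 (h i)

lemma conf_of_between {n : ℕ} {x y : Fin n → ℤ}
    (h : ∀ i, min 0 (y i) ≤ x i ∧ x i ≤ max 0 (y i)) : ConformalLE x y :=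
  fun i => conf_scalar_iff.2 (h i)

lemma conformal_trans {n : ℕ} {a b c : Fin n → ℤ}
    (h1 : ConformalLE a b) (h2 : ConformalLE b c) : ConformalLE a c := by
  apply conf_of_between
  intro i
  have H1 := conf_between h1 i
  have H2 := conf_between h2 i
  constructor <;> omega

/-- a minimal nonzero conformal kernel element is in the Graver basis -/

lemma decomp_step {m n : ℕ} (A : Matrix (Fin m) (Fin n) ℤ) (y : Fin n → ℤ)
    (hy : A.mulVec y = 0) (hy0 : y ≠ 0) :
    ∃ h : Fin n → ℤ, h ∈ GraverBasis A ∧ ConformalLE h y := by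
  classical
  set S : Set (Fin n → ℤ) := {h | A.mulVec h = 0 ∧ h ≠ 0 ∧ ConformalLE h y} with hS
  set f : (Fin n → ℤ) → ℕ := fun h => ∑ i, (h i).natAbs with hf
  have hyS : y ∈ S := ⟨hy, hy0, fun i => ⟨mul_self_nonneg _, le_refl _⟩⟩
  have hne : (f '' S).Nonempty := ⟨f y, y, hyS, rfl⟩
  obtain ⟨h, hS', hfh⟩ := Nat.sInf_mem hne
  refine ⟨h, ⟨hS'.1, hS'.2.1, ?_⟩, hS'.2.2⟩
  intro h' hk h0 hc
  have hc' : ConformalLE h' y := conformal_trans hc hS'.2.2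
  have hmin : f h ≤ f h' := by
    rw [hfh]; exact Nat.sInf_le ⟨h', ⟨hk, h0, hc'⟩, rfl⟩
  have hle : ∀ i ∈ Finset.univ, (h' i).natAbs ≤ (h i).natAbs := by
    intro i _
    have := (hc i).2
    rw [Int.abs_eq_natAbs, Int.abs_eq_natAbs] at this
    exact_mod_cast this
  have heq : ∀ i ∈ Finset.univ, (h' i).natAbs = (h i).natAbs := by
    rw [← Finset.sum_eq_sum_iff_of_le hle]
    exact le_antisymm (Finset.sum_le_sum hle) hmin
  funext i
  have habs : (h' i).natAbs = (h i).natAbs := heq i (Finset.mem_univ i)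
  have hsgn := (hc i).1
  rcases Int.natAbs_eq_natAbs_iff.1 habs with h3 | h3
  · exact h3
  · rw [h3] at hsgn ⊢
    have : h i = 0 := by nlinarith
    simp [this]

lemma decomp_main {m n : ℕ} (A : Matrix (Fin m) (Fin n) ℤ) :
    ∀ N (y : Fin n → ℤ), (∑ i, (y i).natAbs) = N → A.mulVec y = 0 →
    ∃ (k : ℕ) (g : Fin k → (Fin n → ℤ)),
      (∀ i, g i ∈ GraverBasis A ∧ ConformalLE (g i) y) ∧ y = ∑ i, g i := by
  intro N
  induction N using Nat.strong_induction_on with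
  | _ N IH =>
    intro y hN hy
    by_cases hy0 : y = 0
    · exact ⟨0, ![], by simp, by simp [hy0]⟩
    · obtain ⟨h, hG, hc⟩ := decomp_step A y hy hy0
      have hk : A.mulVec (y - h) = 0 := by
        rw [Matrix.mulVec_sub, hy, hG.1, sub_zero]
      have hptw : ∀ i, (y i - h i).natAbs + (h i).natAbs = (y i).natAbs := by
        intro i
        have := conf_between hc i
        omega
      have hh0 : ∃ j, h j ≠ 0 := Function.ne_iff.1 hG.2.1
      obtain ⟨j, hj⟩ := hh0
      have hlt : (∑ i, ((y - h) i).natAbs) < N := by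
        have e1 : (∑ i, ((y - h) i).natAbs) + (∑ i, (h i).natAbs) = N := by
          rw [← hN, ← Finset.sum_add_distrib]
          exact Finset.sum_congr rfl (fun i _ => by simpa using hptw i)
        have e2 : 0 < ∑ i, (h i).natAbs :=
          lt_of_lt_of_le (by omega : 0 < (h j).natAbs)
            (Finset.single_le_sum (f := fun i => (h i).natAbs) (fun i _ => Nat.zero_le _)
              (Finset.mem_univ j))
        omega
      obtain ⟨k, g, hg, hsum⟩ := IH _ hlt (y - h) rfl hk
      refine ⟨k + 1, Fin.cons h g, ?_, ?_⟩
      · intro i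
        refine Fin.cases ?_ ?_ i
        · exact ⟨hG, hc⟩
        · intro i'
          simp only [Fin.cons_succ]
          refine ⟨(hg i').1, conformal_trans (hg i').2 ?_⟩
          apply conf_of_between
          intro t
          have := conf_between hc t
          simp only [Pi.sub_apply]
          omega
      · rw [Fin.sum_cons, ← hsum]
        abel

lemma ecast_le {a b : ℤ} (h : a ≤ b) : ((a : ℝ) : EReal) ≤ ((b : ℝ) : EReal) :=
  EReal.coe_le_coe_iff.mpr (by exact_mod_cast h)

lemma subset_between {k : ℕ} (a : Fin k → ℤ) (c : ℤ)
    (h : ∀ t, min 0 c ≤ a t ∧ a t ≤ max 0 c) (hsum : ∑ t, a t = c) (T : Finset (Fin k)) :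
    min 0 c ≤ ∑ t ∈ T, a t ∧ ∑ t ∈ T, a t ≤ max 0 c := by
  rcases le_total 0 c with hc | hc
  · have h0 : ∀ t, 0 ≤ a t := fun t => le_trans (by simp [min_eq_left hc]) (h t).1
    constructor
    · exact le_trans (min_le_left _ _) (Finset.sum_nonneg fun t _ => h0 t)
    · rw [max_eq_right hc, ← hsum]
      exact Finset.sum_le_sum_of_subset_of_nonneg (Finset.subset_univ T) (fun t _ _ => h0 t)
  · have h0 : ∀ t, a t ≤ 0 := fun t => le_trans (h t).2 (by simp [max_eq_left hc])
    constructor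
    · rw [min_eq_right hc, ← hsum]
      have := Finset.sum_le_sum_of_subset_of_nonneg (f := fun t => -a t)
        (Finset.subset_univ T) (fun t _ _ => neg_nonneg.2 (h0 t))
      simp only [Finset.sum_neg_distrib, neg_le_neg_iff] at this
      exact this
    · exact le_trans (Finset.sum_nonpos fun t _ => h0 t) (le_max_left _ _)

/-- If `x` and `z` are feasible for the same integer program, then `z - x`
decomposes as a sum of Graver basis elements conformal to `z - x`, and every
partial sum `x + (g₁ + ⋯ + g_j)` is again feasible. -/
theorem feasible_difference_conformal_graver_decomposition {m n : ℕ}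
    (A : Matrix (Fin m) (Fin n) ℤ) (b : Fin m → ℤ) (l u : Fin n → EReal)
    (x z : Fin n → ℤ) (hx : Feasible A b l u x) (hz : Feasible A b l u z) :
    ∃ (k : ℕ) (g : Fin k → (Fin n → ℤ)),
      (∀ i, g i ∈ GraverBasis A ∧ ConformalLE (g i) (z - x)) ∧
      z - x = ∑ i, g i ∧
      ∀ j : ℕ, j ≤ k →
        Feasible A b l u (x + ∑ i ∈ Finset.univ.filter (fun i : Fin k => (i : ℕ) < j), g i) := by
  classical
  have hky : A.mulVec (z - x) = 0 := by
    rw [Matrix.mulVec_sub, hx.1, hz.1, sub_self]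
  obtain ⟨k, g, hg, hsum⟩ := decomp_main A _ (z - x) rfl hky
  refine ⟨k, g, hg, hsum, ?_⟩
  intro j hj
  set T := Finset.univ.filter (fun i : Fin k => (i : ℕ) < j) with hT
  set s := ∑ i ∈ T, g i with hs
  constructor
  · have hks : A.mulVec s = 0 := by
      rw [hs]
      have h1 : A.mulVec (∑ i ∈ T, g i) = ∑ i ∈ T, A.mulVec (g i) := by
        simp only [← Matrix.mulVecLin_apply]
        exact map_sum A.mulVecLin g T
      rw [h1]
      exact Finset.sum_eq_zero fun i _ => (hg i).1.1
    rw [Matrix.mulVec_add, hx.1, hks, add_zero]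
  · intro i
    have hsi : s i = ∑ t ∈ T, g t i := by rw [hs]; exact Finset.sum_apply i T g
    have htot : ∑ t, g t i = z i - x i := by
      have h2 := congrFun hsum i
      simp only [Pi.sub_apply, Finset.sum_apply] at h2
      omega
    have hcomp : min 0 (z i - x i) ≤ s i ∧ s i ≤ max 0 (z i - x i) := by
      rw [hsi]
      exact subset_between (fun t => g t i) (z i - x i)
        (fun t => by simpa using conf_between (hg t).2 i) htot T
    have hx2 := hx.2 i
    have hz2 := hz.2 i
    have hadd : (x + s) i = x i + s i := rfl
    rw [hadd]
    constructor
    · rcases (by omega : x i ≤ x i + s i ∨ z i ≤ x i + s i) with hc2 | hc2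
      · exact le_trans hx2.1 (ecast_le hc2)
      · exact le_trans hz2.1 (ecast_le hc2)
    · rcases (by omega : x i + s i ≤ x i ∨ x i + s i ≤ z i) with hc2 | hc2
      · exact le_trans (ecast_le hc2) hx2.2
      · exact le_trans (ecast_le hc2) hz2.2
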